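/- arXiv:math/0606111 — 3 statements merged into one kernel-verified Lean document; each statement's English description precedes it below -/
import Mathlib

section
/- For each j and each k ≥ 1, the set closure(Φ_j(C_{k-1}) \ Φ_j(C_k)) is the closure of its interior. -/
/-!
Each `C k` is closed and contained in the closure of its interior: for `C 0` because a convex body
with nonempty interior is, and closed because the convex hull of a compact set is compact in finite
dimension; for `C (k + 1)` because bijective affine maps are homeomorphisms and the union is
finite. Removing a closed set `T` from such a set `S` leaves a set whose closure is the closure of
the open set `interior S \ T`, and the closure of an open set is the closure of its interior.
-/

open Set

section Topology

variable {X : Type*} [TopologicalSpace X]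

theorem diff_subset_closure_interior_diff {S T : Set X} (hS : S ⊆ closure (interior S))
    (hT : IsClosed T) : S \ T ⊆ closure (interior S \ T) := by
  rintro x ⟨hxS, hxT⟩
  simpa only [sdiff_eq, inter_comm] using hT.isOpen_compl.inter_closure ⟨hxT, hS hxS⟩

theorem closure_diff_eq_closure_interior_closure {S T : Set X} (hS : S ⊆ closure (interior S))
    (hT : IsClosed T) : closure (S \ T) = closure (interior (closure (S \ T))) := by
  refine Subset.antisymm (closure_minimal ?_ isClosed_closure)
    isClosed_closure.closure_interior_subset
  have hopen : interior S \ T ⊆ interior (closure (S \ T)) :=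
    interior_maximal (subset_closure.trans' (sdiff_subset_sdiff_left interior_subset))
      (isOpen_interior.sdiff hT)
  exact (diff_subset_closure_interior_diff hS hT).trans (closure_mono hopen)

theorem subset_closure_interior_iUnion {ι : Sort*} {S : ι → Set X}
    (h : ∀ i, S i ⊆ closure (interior (S i))) : ⋃ i, S i ⊆ closure (interior (⋃ i, S i)) :=
  iUnion_subset fun i => (h i).trans (closure_mono (interior_mono (subset_iUnion S i)))

theorem IsHomeomorph.image_subset_closure_interior {Y : Type*} [TopologicalSpace Y] {f : X → Y}
    (hf : IsHomeomorph f) {S : Set X} (hS : S ⊆ closure (interior S)) :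
    f '' S ⊆ closure (interior (f '' S)) := by
  rw [← hf.image_interior, ← hf.image_closure]
  exact image_mono hS

theorem isClosed_and_subset_closure_interior_of_iterate {ι : Type*} [Finite ι]
    {f : ι → X → X} (hf : ∀ j, IsHomeomorph (f j)) {C : ℕ → Set X}
    (hC0 : IsClosed (C 0) ∧ C 0 ⊆ closure (interior (C 0)))
    (hCsucc : ∀ k, C (k + 1) = ⋃ j, f j '' C k) (k : ℕ) :
    IsClosed (C k) ∧ C k ⊆ closure (interior (C k)) := by
  induction k with
  | zero => exact hC0
  | succ k ih =>
    rw [hCsucc k]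
    exact ⟨isClosed_iUnion_of_finite fun j => (hf j).isClosedMap _ ih.1,
      subset_closure_interior_iUnion fun j => (hf j).image_subset_closure_interior ih.2⟩

end Topology

section Convex

theorem convexHull_range_eq_image_stdSimplex {R ι E : Type*} [Field R] [LinearOrder R]
    [IsStrictOrderedRing R] [Fintype ι] [AddCommGroup E] [Module R E] (v : ι → E) :
    convexHull R (range v) = (fun w : ι → R => ∑ i, w i • v i) '' stdSimplex R ι := by
  classical
  have hlin : (fun w : ι → R => ∑ i, w i • v i) =
      ⇑(∑ i, (LinearMap.proj (R := R) i).smulRight (v i)) := by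
    ext w; simp
  rw [hlin, ← convexHull_basis_eq_stdSimplex, LinearMap.image_convexHull, ← range_comp]
  congr 2
  ext i
  simp

theorem Convex.subset_closure_interior {E : Type*} [AddCommGroup E] [Module ℝ E]
    [TopologicalSpace E] [IsTopologicalAddGroup E] [ContinuousSMul ℝ E] {s : Set E}
    (hs : Convex ℝ s) (hint : (interior s).Nonempty) : s ⊆ closure (interior s) :=
  (hs.closure_interior_eq_closure_of_nonempty_interior hint).symm ▸ subset_closure

end Convex

section FiniteDimensional

variable {E : Type*} [NormedAddCommGroup E] [NormedSpace ℝ E] [FiniteDimensional ℝ E]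

theorem isCompact_convexHull {s : Set E} (hs : IsCompact s) : IsCompact (convexHull ℝ s) := by
  set n := Module.finrank ℝ E + 1
  let f : (Fin n → ℝ) × (Fin n → E) → E := fun p => ∑ i, p.1 i • p.2 i
  suffices convexHull ℝ s = f '' (stdSimplex ℝ (Fin n) ×ˢ univ.pi fun _ => s) by
    rw [this]
    refine ((isCompact_stdSimplex ℝ (Fin n)).prod (isCompact_univ_pi fun _ => hs)).image ?_
    fun_prop
  refine Subset.antisymm (fun x hx => ?_) ?_
  -- Carathéodory: `x` lies in the hull of at most `n` points of `s`, listed with repetitions as `v`.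
  · rw [convexHull_eq_union] at hx
    simp only [mem_iUnion] at hx
    obtain ⟨t, hts, hind, hxt⟩ := hx
    have hcard : Fintype.card t ≤ n :=
      hind.card_le_finrank_succ.trans (Nat.add_le_add_right (Submodule.finrank_le _) 1)
    obtain ⟨e⟩ : Nonempty (t ↪ Fin n) :=
      Function.Embedding.nonempty_of_card_le (by simpa using hcard)
    have : Nonempty t := (convexHull_nonempty_iff.1 ⟨x, hxt⟩).to_subtype
    let v : Fin n → E := (↑) ∘ Function.invFun e
    have hv : range v = t := by
      rw [range_comp, (Function.invFun_surjective e.injective).range_eq, image_univ,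
        Subtype.range_coe]
    rw [← hv, convexHull_range_eq_image_stdSimplex] at hxt
    obtain ⟨w, hw, rfl⟩ := hxt
    exact ⟨(w, v), ⟨hw, fun i _ => hts (hv ▸ mem_range_self i)⟩, rfl⟩
  · rintro _ ⟨⟨w, z⟩, ⟨hw, hz⟩, rfl⟩
    exact (convex_convexHull ℝ s).sum_mem (fun i _ => hw.1 i) hw.2
      fun i _ => subset_convexHull ℝ s (hz i (mem_univ i))

theorem AffineMap.isHomeomorph_of_bijective {F : Type*} [NormedAddCommGroup F] [NormedSpace ℝ F]
    (φ : E →ᵃ[ℝ] F) (h : Function.Bijective φ) : IsHomeomorph φ :=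
  (AffineEquiv.ofBijective h).toContinuousAffineEquiv.toHomeomorph.isHomeomorph

end FiniteDimensional

theorem stmt11_general (d J : ℕ)
    (Φ : Fin J → (EuclideanSpace ℝ (Fin d) →ᵃ[ℝ] EuclideanSpace ℝ (Fin d)))
    (F : Set (EuclideanSpace ℝ (Fin d)))
    (hFc : IsCompact F)
    (hbij : ∀ j, Function.Bijective (Φ j))
    (C : ℕ → Set (EuclideanSpace ℝ (Fin d)))
    (hC0 : C 0 = convexHull ℝ F)
    (hCsucc : ∀ k, C (k + 1) = ⋃ j, (Φ j) '' C k)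
    (hnt : (interior (convexHull ℝ F)).Nonempty) :
    ∀ j, ∀ k, closure ((Φ j) '' C k \ (Φ j) '' C (k + 1)) =
      closure (interior (closure ((Φ j) '' C k \ (Φ j) '' C (k + 1)))) := by
  have hΦ : ∀ j, IsHomeomorph (Φ j) := fun j => (Φ j).isHomeomorph_of_bijective (hbij j)
  have hC : ∀ k, IsClosed (C k) ∧ C k ⊆ closure (interior (C k)) :=
    isClosed_and_subset_closure_interior_of_iterate hΦ
      (hC0 ▸ ⟨(isCompact_convexHull hFc).isClosed,
        (convex_convexHull ℝ F).subset_closure_interior hnt⟩) hCsucc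
  intro j k
  exact closure_diff_eq_closure_interior_closure ((hΦ j).image_subset_closure_interior (hC k).2)
    ((hΦ j).isClosedMap _ (hC (k + 1)).1)

theorem stmt11 (d J : ℕ)
    (Φ : Fin J → (EuclideanSpace ℝ (Fin d) →ᵃ[ℝ] EuclideanSpace ℝ (Fin d)))
    (r : Fin J → NNReal) (hr : ∀ j, r j < 1)
    (hlip : ∀ j, LipschitzWith (r j) (Φ j))
    (F : Set (EuclideanSpace ℝ (Fin d)))
    (hFne : F.Nonempty) (hFc : IsCompact F)
    (hFinv : F = ⋃ j, (Φ j) '' F)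
    (hbij : ∀ j, Function.Bijective (Φ j))
    (C : ℕ → Set (EuclideanSpace ℝ (Fin d)))
    (hC0 : C 0 = convexHull ℝ F)
    (hCsucc : ∀ k, C (k + 1) = ⋃ j, (Φ j) '' C k)
    (hnt : (interior (convexHull ℝ F)).Nonempty)
    (hts : ∀ j ℓ, j ≠ ℓ → interior ((Φ j) '' convexHull ℝ F) ∩ interior ((Φ ℓ) '' convexHull ℝ F) = ∅) :
    ∀ j, ∀ k, closure ((Φ j) '' C k \ (Φ j) '' C (k + 1)) =
      closure (interior (closure ((Φ j) '' C k \ (Φ j) '' C (k + 1)))) :=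
  stmt11_general d J Φ F hFc hbij C hC0 hCsucc hnt
end

section
/- Each tileset is the image under Φ of its predecessor: Φ(T_k) = T_{k+1} for all k ≥ 1, where T_k = closure(C_{k-1} \ C_k). -/
/-!
Every point of `C_k` is a limit of interior points of `C_k`: this holds for the convex body `C_0`
and survives homeomorphic images and unions. So for `y ∈ C_k \ C_{k+1}` the point `Φ_j y` is a
limit of points of the open set `interior (Φ_j C_k) \ Φ_j C_{k+1}`, and these lie in
`C_{k+1} \ C_{k+2}`: they avoid `Φ_j C_{k+1}` by construction, and every other piece `Φ_m C_{k+1}`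
is contained in the body `Φ_m C_0`, which an open set disjoint from `interior (Φ_m C_0)` cannot
meet. The reverse inclusion only needs `C_{k+1} \ C_{k+2} ⊆ ⋃ j, Φ_j (C_k \ C_{k+1})`.
-/

open Set Module

section Caratheodory

variable {𝕜 E : Type*} [Field 𝕜] [LinearOrder 𝕜] [IsStrictOrderedRing 𝕜]
  [AddCommGroup E] [Module 𝕜 E] [FiniteDimensional 𝕜 E]

theorem exists_fin_sum_smul_eq_of_mem_convexHull {s : Set E} {x : E} (hx : x ∈ convexHull 𝕜 s) :
    ∃ k ≤ finrank 𝕜 E + 1, ∃ w ∈ stdSimplex 𝕜 (Fin k), ∃ z : Fin k → E,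
      (∀ i, z i ∈ s) ∧ ∑ i, w i • z i = x := by
  obtain ⟨ι, _, z, w, hzs, hz, hw0, hw1, rfl⟩ := eq_pos_convex_span_of_mem_convexHull hx
  let e := Fintype.equivFin ι
  refine ⟨Fintype.card ι, hz.card_le_finrank_succ.trans
    (Nat.add_le_add_right (Submodule.finrank_le _) 1), w ∘ e.symm,
    ⟨fun i => (hw0 _).le, (e.symm.sum_comp w).trans hw1⟩, z ∘ e.symm,
    fun i => hzs (mem_range_self _), e.symm.sum_comp fun i => w i • z i⟩

end Caratheodory

theorem isCompact_convexHull_s14 {E : Type*} [AddCommGroup E] [Module ℝ E] [TopologicalSpace E]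
    [IsTopologicalAddGroup E] [ContinuousSMul ℝ E] [FiniteDimensional ℝ E] {s : Set E}
    (hs : IsCompact s) : IsCompact (convexHull ℝ s) := by
  have hull_eq : convexHull ℝ s = ⋃ k : Fin (finrank ℝ E + 2),
      (fun q : (Fin k → ℝ) × (Fin k → E) => ∑ i, q.1 i • q.2 i) ''
        (stdSimplex ℝ (Fin k) ×ˢ univ.pi fun _ => s) := by
    refine Subset.antisymm (fun x hx => ?_) (iUnion_subset fun k => ?_)
    · obtain ⟨k, hk, w, hw, z, hzs, rfl⟩ := exists_fin_sum_smul_eq_of_mem_convexHull hx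
      exact mem_iUnion.2 ⟨⟨k, Nat.lt_succ_of_le hk⟩, (w, z), ⟨hw, fun i _ => hzs i⟩, rfl⟩
    · rintro _ ⟨⟨w, z⟩, ⟨⟨hw0, hw1⟩, hzs⟩, rfl⟩
      exact (convex_convexHull ℝ s).sum_mem (fun i _ => hw0 i) hw1
        fun i _ => subset_convexHull ℝ s (hzs i (mem_univ i))
  rw [hull_eq]
  exact isCompact_iUnion fun k =>
    ((isCompact_stdSimplex ℝ _).prod (isCompact_univ_pi fun _ => hs)).image (by fun_prop)

section RegularClosed

variable {X Y : Type*} [TopologicalSpace X] [TopologicalSpace Y]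

theorem Homeomorph.image_subset_closure_interior (h : X ≃ₜ Y) {s : Set X}
    (hs : s ⊆ closure (interior s)) : h '' s ⊆ closure (interior (h '' s)) := by
  rw [← h.image_interior, ← h.image_closure]
  exact image_mono hs

theorem iUnion_subset_closure_interior {ι : Sort*} {s : ι → Set X}
    (hs : ∀ i, s i ⊆ closure (interior (s i))) : ⋃ i, s i ⊆ closure (interior (⋃ i, s i)) :=
  iUnion_subset fun i => (hs i).trans (closure_mono (interior_mono (subset_iUnion s i)))

end RegularClosed

section Iterates

variable {X ι : Type*} {C : ℕ → Set X}

theorem antitone_of_iUnion_image {f : ι → X → X} (hC : ∀ k, C (k + 1) = ⋃ j, f j '' C k)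
    (h₁ : C 1 ⊆ C 0) : Antitone C := by
  refine antitone_nat_of_succ_le fun k => ?_
  induction k with
  | zero => exact h₁
  | succ k ih =>
    exact (hC (k + 1)).trans_subset ((iUnion_mono fun j => image_mono ih).trans (hC k).symm.subset)

theorem succ_diff_subset_iUnion_image_diff {f : ι → X → X}
    (hC : ∀ k, C (k + 1) = ⋃ j, f j '' C k) (k : ℕ) :
    C (k + 1) \ C (k + 2) ⊆ ⋃ j, f j '' (C k \ C (k + 1)) := by
  rintro _ ⟨hx, hx'⟩
  rw [hC] at hx
  obtain ⟨j, y, hy, rfl⟩ := mem_iUnion.1 hx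
  refine mem_iUnion.2 ⟨j, y, ⟨hy, fun hy' => hx' ?_⟩, rfl⟩
  rw [hC]
  exact mem_iUnion.2 ⟨j, y, hy', rfl⟩

variable [TopologicalSpace X]

theorem isClosed_of_iUnion_image [Finite ι] {f : ι → X → X} (hf : ∀ j, IsClosedMap (f j))
    (hC : ∀ k, C (k + 1) = ⋃ j, f j '' C k) (h₀ : IsClosed (C 0)) (k : ℕ) : IsClosed (C k) := by
  induction k with
  | zero => exact h₀
  | succ k ih => rw [hC]; exact isClosed_iUnion_of_finite fun j => hf j _ ih

theorem subset_closure_interior_of_iUnion_image (f : ι → X ≃ₜ X)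
    (hC : ∀ k, C (k + 1) = ⋃ j, f j '' C k) (h₀ : C 0 ⊆ closure (interior (C 0))) (k : ℕ) :
    C k ⊆ closure (interior (C k)) := by
  induction k with
  | zero => exact h₀
  | succ k ih =>
    rw [hC]
    exact iUnion_subset_closure_interior fun j => (f j).image_subset_closure_interior ih

variable [Finite ι] (f : ι → X ≃ₜ X)

theorem image_diff_subset_closure_succ_diff (hC : ∀ k, C (k + 1) = ⋃ j, f j '' C k)
    (h₀ : IsClosed (C 0)) (hreg : C 0 ⊆ closure (interior (C 0))) (h₁ : C 1 ⊆ C 0)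
    (htile : Pairwise fun j m => Disjoint (interior (f j '' C 0)) (interior (f m '' C 0)))
    (j : ι) (k : ℕ) : f j '' (C k \ C (k + 1)) ⊆ closure (C (k + 1) \ C (k + 2)) := by
  have hanti := antitone_of_iUnion_image (f := fun j => f j) hC h₁
  have hreg_k := subset_closure_interior_of_iUnion_image f hC hreg
  set U := (f j '' C (k + 1))ᶜ ∩ interior (f j '' C k)
  have hU : U ⊆ C (k + 1) \ C (k + 2) := by
    rintro z ⟨hzj, hz⟩
    refine ⟨hC k ▸ subset_iUnion (fun m => f m '' C k) j (interior_subset hz), fun hz' => ?_⟩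
    rw [hC] at hz'
    obtain ⟨m, hm⟩ := mem_iUnion.1 hz'
    obtain rfl | hmj := eq_or_ne m j
    · exact hzj hm
    -- the open set `interior (f j '' C 0)` misses the closure of `interior (f m '' C 0)`
    have hdisj : Disjoint (interior (f j '' C 0)) (f m '' C 0) :=
      ((htile hmj.symm).closure_right isOpen_interior).mono_right
        ((f m).image_subset_closure_interior hreg)
    exact hdisj.notMem_of_mem_left (interior_mono (image_mono (hanti k.zero_le)) hz)
      (image_mono (hanti (k + 1).zero_le) hm)
  rintro _ ⟨y, ⟨hyk, hyk'⟩, rfl⟩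
  have hclosed := isClosed_of_iUnion_image (fun m => (f m).isClosedMap) hC h₀ (k + 1)
  have hopen : IsOpen (f j '' C (k + 1))ᶜ := ((f j).isClosedMap _ hclosed).isOpen_compl
  refine closure_mono hU (hopen.inter_closure ⟨fun hy => hyk' ?_, ?_⟩)
  · exact (f j).injective.mem_set_image.1 hy
  · exact (f j).image_subset_closure_interior (hreg_k k) (mem_image_of_mem _ hyk)

theorem iUnion_image_closure_diff (hC : ∀ k, C (k + 1) = ⋃ j, f j '' C k)
    (h₀ : IsClosed (C 0)) (hreg : C 0 ⊆ closure (interior (C 0))) (h₁ : C 1 ⊆ C 0)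
    (htile : Pairwise fun j m => Disjoint (interior (f j '' C 0)) (interior (f m '' C 0)))
    (k : ℕ) : ⋃ j, f j '' closure (C k \ C (k + 1)) = closure (C (k + 1) \ C (k + 2)) := by
  refine Subset.antisymm (iUnion_subset fun j => ?_) ?_
  · rw [(f j).image_closure, ← closure_closure (s := C (k + 1) \ C (k + 2))]
    exact closure_mono (image_diff_subset_closure_succ_diff f hC h₀ hreg h₁ htile j k)
  · refine closure_minimal ?_
      (isClosed_iUnion_of_finite fun j => (f j).isClosedMap _ isClosed_closure)
    exact (succ_diff_subset_iUnion_image_diff (f := fun j => f j) hC k).trans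
      (iUnion_mono fun j => image_mono subset_closure)

end Iterates

theorem stmt14_general (d J : ℕ)
    (Φ : Fin J → (EuclideanSpace ℝ (Fin d) →ᵃ[ℝ] EuclideanSpace ℝ (Fin d)))
    (F : Set (EuclideanSpace ℝ (Fin d)))
    (hFc : IsCompact F)
    (hFinv : F = ⋃ j, (Φ j) '' F)
    (hbij : ∀ j, Function.Bijective (Φ j))
    (C : ℕ → Set (EuclideanSpace ℝ (Fin d)))
    (hC0 : C 0 = convexHull ℝ F)
    (hCsucc : ∀ k, C (k + 1) = ⋃ j, (Φ j) '' C k)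
    (hnt : (interior (convexHull ℝ F)).Nonempty)
    (hts : ∀ j ℓ, j ≠ ℓ → interior ((Φ j) '' convexHull ℝ F) ∩ interior ((Φ ℓ) '' convexHull ℝ F) = ∅) :
    ∀ k, (⋃ j, (Φ j) '' closure (C k \ C (k + 1))) =
      closure (C (k + 1) \ C (k + 2)) := by
  let e : Fin J → EuclideanSpace ℝ (Fin d) ≃ₜ EuclideanSpace ℝ (Fin d) := fun j =>
    (AffineEquiv.ofBijective (hbij j)).toContinuousAffineEquiv.toHomeomorph
  have hreg : C 0 ⊆ closure (interior (C 0)) := by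
    rw [hC0, (convex_convexHull ℝ F).closure_interior_eq_closure_of_nonempty_interior hnt]
    exact subset_closure
  have h₁ : C 1 ⊆ C 0 := by
    rw [hCsucc, hC0]
    refine iUnion_subset fun j => ?_
    rw [AffineMap.image_convexHull]
    exact convexHull_mono ((subset_iUnion (fun i => Φ i '' F) j).trans hFinv.symm.subset)
  refine iUnion_image_closure_diff e hCsucc (hC0 ▸ (isCompact_convexHull_s14 hFc).isClosed) hreg h₁ ?_
  intro j ℓ hjℓ
  rw [hC0, disjoint_iff_inter_eq_empty]
  exact hts j ℓ hjℓ

theorem stmt14 (d J : ℕ)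
    (Φ : Fin J → (EuclideanSpace ℝ (Fin d) →ᵃ[ℝ] EuclideanSpace ℝ (Fin d)))
    (r : Fin J → NNReal) (hr : ∀ j, r j < 1)
    (hlip : ∀ j, LipschitzWith (r j) (Φ j))
    (F : Set (EuclideanSpace ℝ (Fin d)))
    (hFne : F.Nonempty) (hFc : IsCompact F)
    (hFinv : F = ⋃ j, (Φ j) '' F)
    (hbij : ∀ j, Function.Bijective (Φ j))
    (C : ℕ → Set (EuclideanSpace ℝ (Fin d)))
    (hC0 : C 0 = convexHull ℝ F)
    (hCsucc : ∀ k, C (k + 1) = ⋃ j, (Φ j) '' C k)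
    (hnt : (interior (convexHull ℝ F)).Nonempty)
    (hts : ∀ j ℓ, j ≠ ℓ → interior ((Φ j) '' convexHull ℝ F) ∩ interior ((Φ ℓ) '' convexHull ℝ F) = ∅) :
    ∀ k, (⋃ j, (Φ j) '' closure (C k \ C (k + 1))) =
      closure (C (k + 1) \ C (k + 2)) :=
  stmt14_general d J Φ F hFc hFinv hbij C hC0 hCsucc hnt hts
end

section
/- Let the generators G_1, …, G_Q be the connected components of interior(C \ Φ(C)). Then for each k ≥ 1, T_k = closure(⊔_{q=1}^Q Φ^{k-1}(G_q)), i.e., the k-th tileset is the closure of the disjoint union of the (k−1)-st images of the generators. -/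
open Set

noncomputable def wordMap {d J : ℕ}
    (Φ : Fin J → (EuclideanSpace ℝ (Fin d) →ᵃ[ℝ] EuclideanSpace ℝ (Fin d))) :
    List (Fin J) → (EuclideanSpace ℝ (Fin d) → EuclideanSpace ℝ (Fin d))
  | [] => id
  | j :: w => (Φ j) ∘ wordMap Φ w

/-! The images of `C 0` under the words of length `k` cover `C k`, and by the tileset condition
their interiors are pairwise disjoint. A point of `C k \ C (k + 1)` is `w y` with
`y ∈ C 0 \ C 1`, and `y` is a limit of points of `interior (C 0 \ C 1)` because `C 0` is
convex with nonempty interior and `C 1` is closed. Conversely, the open set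
`w '' interior (C 0 \ C 1)` meets the other tiles of generation `k` only in their frontiers,
which are closed and nowhere dense; off them it lies in `C k \ C (k + 1)`. The pieces
`w '' G` are disjoint because different words land in disjoint tile interiors and a single
word is injective on the disjoint components. -/

theorem IsCompact.convexHull_of_finiteDimensional {E : Type*} [NormedAddCommGroup E]
    [NormedSpace ℝ E] [FiniteDimensional ℝ E] {s : Set E} (hs : IsCompact s) :
    IsCompact (convexHull ℝ s) := by
  have hcover : convexHull ℝ s = ⋃ m : Fin (Module.finrank ℝ E + 2),
      (fun p : (Fin m → ℝ) × (Fin m → E) => ∑ i, p.1 i • p.2 i) ''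
        (stdSimplex ℝ (Fin m) ×ˢ univ.pi fun _ => s) := by
    refine Subset.antisymm (fun x hx => ?_) (iUnion_subset fun m => ?_)
    · obtain ⟨ι, _, z, w, hzs, hz, hw0, hw1, rfl⟩ := eq_pos_convex_span_of_mem_convexHull hx
      have hcard : Fintype.card ι < Module.finrank ℝ E + 2 := by
        have := (vectorSpan ℝ (range z)).finrank_le
        have := hz.card_le_finrank_succ
        omega
      let e := Fintype.equivFin ι
      refine mem_iUnion.2 ⟨⟨_, hcard⟩, (w ∘ e.symm, z ∘ e.symm), ⟨⟨fun i => (hw0 _).le, ?_⟩,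
        fun i _ => hzs (mem_range_self _)⟩, ?_⟩
      · simpa only [Function.comp_apply] using (e.symm.sum_comp w).trans hw1
      · exact e.symm.sum_comp fun i => w i • z i
    · rintro _ ⟨⟨w, z⟩, ⟨⟨hw0, hw1⟩, hz⟩, rfl⟩
      exact (convex_convexHull ℝ s).sum_mem (fun i _ => hw0 i) hw1
        fun i _ => subset_convexHull ℝ s (hz i (mem_univ i))
  rw [hcover]
  exact isCompact_iUnion fun m =>
    ((isCompact_stdSimplex ℝ _).prod (isCompact_univ_pi fun _ => hs)).image (by fun_prop)

theorem Convex.diff_subset_closure_interior_diff {E : Type*} [NormedAddCommGroup E]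
    [NormedSpace ℝ E] {s t : Set E} (hs : Convex ℝ s) (hs' : (interior s).Nonempty)
    (ht : IsClosed t) : s \ t ⊆ closure (interior (s \ t)) := by
  rintro x ⟨hxs, hxt⟩
  have hx : x ∈ closure (interior s) :=
    (hs.closure_interior_eq_closure_of_nonempty_interior hs').symm ▸ subset_closure hxs
  have := ht.isOpen_compl.inter_closure ⟨hxt, hx⟩
  rwa [sdiff_eq, interior_inter, ht.isOpen_compl.interior_eq, inter_comm]

theorem IsOpen.subset_closure_diff_biUnion {X ι : Type*} [TopologicalSpace X] {U : Set X}
    (hU : IsOpen U) {S : Set ι} (hS : S.Finite) {A : ι → Set X} (hA : ∀ i ∈ S, IsClosed (A i))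
    (hUA : ∀ i ∈ S, Disjoint U (interior (A i))) : U ⊆ closure (U \ ⋃ i ∈ S, A i) := by
  have hdense : Dense (⋂ i ∈ S, (A i)ᶜ ∪ interior (A i)) := by
    rw [← sInter_image]
    refine (hS.image _).dense_sInter ?_ ?_ <;> rintro _ ⟨i, hi, rfl⟩
    · exact (hA i hi).isOpen_compl.union isOpen_interior
    · rw [dense_iff_closure_eq, eq_univ_iff_forall]
      intro x
      by_cases hx : x ∈ interior (A i)
      · exact subset_closure (Or.inr hx)
      · exact closure_mono subset_union_left (closure_compl (s := A i) ▸ hx)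
  refine (hdense.open_subset_closure_inter hU).trans (closure_mono ?_)
  rintro x ⟨hxU, hx⟩
  simp only [mem_iInter₂] at hx
  refine ⟨hxU, fun hxA => ?_⟩
  obtain ⟨i, hi, hxA⟩ := mem_iUnion₂.1 hxA
  exact (hx i hi).elim (· hxA) (disjoint_left.1 (hUA i hi) hxU)

theorem AffineMap.isHomeomorph_of_bijective_s15 {𝕜 E : Type*} [NontriviallyNormedField 𝕜]
    [CompleteSpace 𝕜] [NormedAddCommGroup E] [NormedSpace 𝕜 E] [FiniteDimensional 𝕜 E]
    {f : E →ᵃ[𝕜] E} (hf : Function.Bijective f) : IsHomeomorph f :=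
  (AffineEquiv.ofBijective hf).toContinuousAffineEquiv.toHomeomorph.isHomeomorph

theorem biUnion_length_eq_add_one {α β : Type*} (k : ℕ) (f : List α → Set β) :
    ⋃ w ∈ {w : List α | w.length = k + 1}, f w =
      ⋃ a, ⋃ w ∈ {w : List α | w.length = k}, f (a :: w) := by
  ext x
  simp only [mem_iUnion, mem_ofPred_eq, exists_prop]
  constructor
  · rintro ⟨w, hw, hx⟩
    obtain ⟨a, v, rfl⟩ := List.exists_cons_of_length_eq_add_one hw
    exact ⟨a, v, by simpa using hw, hx⟩
  · rintro ⟨a, w, hw, hx⟩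
    exact ⟨a :: w, by simpa using hw, hx⟩

theorem connectedComponentIn_disjoint {X : Type*} [TopologicalSpace X] {F : Set X} {x y : X}
    (h : connectedComponentIn F x ≠ connectedComponentIn F y) :
    Disjoint (connectedComponentIn F x) (connectedComponentIn F y) :=
  disjoint_left.2 fun _ h1 h2 =>
    h ((connectedComponentIn_eq h1).trans (connectedComponentIn_eq h2).symm)

theorem sUnion_connectedComponentIn {X : Type*} [TopologicalSpace X] (F : Set X) :
    ⋃₀ {G | ∃ x ∈ F, G = connectedComponentIn F x} = F :=
  Subset.antisymm (sUnion_subset fun _ ⟨x, _, hG⟩ => hG ▸ connectedComponentIn_subset F x)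
    fun x hx => ⟨_, ⟨x, hx, rfl⟩, mem_connectedComponentIn hx⟩

namespace wordMap

variable {d J : ℕ} {Φ : Fin J → (EuclideanSpace ℝ (Fin d) →ᵃ[ℝ] EuclideanSpace ℝ (Fin d))}

theorem image_cons (j : Fin J) (w : List (Fin J)) (s : Set (EuclideanSpace ℝ (Fin d))) :
    wordMap Φ (j :: w) '' s = Φ j '' (wordMap Φ w '' s) :=
  image_comp _ _ s

theorem isHomeomorph (hΦ : ∀ j, Function.Bijective (Φ j)) (w : List (Fin J)) :
    IsHomeomorph (wordMap Φ w) := by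
  induction w with
  | nil => exact IsHomeomorph.id
  | cons j w ih => exact (AffineMap.isHomeomorph_of_bijective_s15 (hΦ j)).comp ih

theorem image_subset {K : Set (EuclideanSpace ℝ (Fin d))} (hK : ∀ j, Φ j '' K ⊆ K)
    (w : List (Fin J)) : wordMap Φ w '' K ⊆ K := by
  induction w with
  | nil => exact (image_id K).subset
  | cons j w ih => exact (image_cons j w K).trans_subset ((image_mono ih).trans (hK j))

variable {C : ℕ → Set (EuclideanSpace ℝ (Fin d))}

theorem eq_iUnion_image (hC : ∀ k, C (k + 1) = ⋃ j, Φ j '' C k) (k m : ℕ) :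
    C (k + m) = ⋃ w ∈ {w : List (Fin J) | w.length = k}, wordMap Φ w '' C m := by
  induction k with
  | zero => simp [List.length_eq_zero_iff, wordMap]
  | succ k ih =>
    rw [biUnion_length_eq_add_one, Nat.add_right_comm, hC, ih]
    simp only [image_iUnion₂, image_cons]

theorem disjoint_interior_image (hΦ : ∀ j, Function.Bijective (Φ j))
    {K : Set (EuclideanSpace ℝ (Fin d))} (hK : ∀ j, Φ j '' K ⊆ K)
    (hdisj : ∀ j ℓ, j ≠ ℓ → Disjoint (interior (Φ j '' K)) (interior (Φ ℓ '' K))) :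
    ∀ {w w' : List (Fin J)}, w.length = w'.length → w ≠ w' →
      Disjoint (interior (wordMap Φ w '' K)) (interior (wordMap Φ w' '' K))
  | [], [], _, hne => absurd rfl hne
  | j :: w, j' :: w', hlen, hne => by
    rw [image_cons, image_cons]
    by_cases hj : j = j'
    · subst hj
      have hw : w ≠ w' := fun h => hne (h ▸ rfl)
      have hΦj := AffineMap.isHomeomorph_of_bijective_s15 (hΦ j)
      rw [← hΦj.image_interior, ← hΦj.image_interior, disjoint_image_iff hΦj.injective]
      exact disjoint_interior_image hΦ hK hdisj (Nat.succ_injective hlen) hw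
    · exact (hdisj j j' hj).mono (interior_mono (image_mono (image_subset hK w)))
        (interior_mono (image_mono (image_subset hK w')))

theorem disjoint_image (hΦ : ∀ j, Function.Bijective (Φ j))
    {K : Set (EuclideanSpace ℝ (Fin d))} (hK : ∀ j, Φ j '' K ⊆ K)
    (hdisj : ∀ j ℓ, j ≠ ℓ → Disjoint (interior (Φ j '' K)) (interior (Φ ℓ '' K)))
    {w w' : List (Fin J)} (hlen : w.length = w'.length) {s t : Set (EuclideanSpace ℝ (Fin d))}
    (hs : s ⊆ interior K) (ht : t ⊆ interior K) (h : w ≠ w' ∨ Disjoint s t) :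
    Disjoint (wordMap Φ w '' s) (wordMap Φ w' '' t) := by
  by_cases hw : w = w'
  · subst hw
    exact (disjoint_image_iff (isHomeomorph hΦ w).injective).2
      (h.resolve_left (not_not_intro rfl))
  · refine (disjoint_interior_image hΦ hK hdisj hlen hw).mono ?_ ?_
    · exact ((isHomeomorph hΦ w).image_interior K).subset.trans' (image_mono hs)
    · exact ((isHomeomorph hΦ w').image_interior K).subset.trans' (image_mono ht)

theorem diff_succ_subset_iUnion_image (hC : ∀ k, C (k + 1) = ⋃ j, Φ j '' C k) (k : ℕ) :
    C k \ C (k + 1) ⊆ ⋃ w ∈ {w : List (Fin J) | w.length = k}, wordMap Φ w '' (C 0 \ C 1) := by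
  rintro x ⟨hx, hx'⟩
  rw [← add_zero k, eq_iUnion_image hC k 0] at hx
  obtain ⟨w, hw, y, hy, rfl⟩ := mem_iUnion₂.1 hx
  refine mem_iUnion₂.2 ⟨w, hw, y, ⟨hy, fun hy' => hx' ?_⟩, rfl⟩
  rw [eq_iUnion_image hC k 1]
  exact mem_iUnion₂.2 ⟨w, hw, y, hy', rfl⟩

theorem image_diff_subset_diff_succ (hC : ∀ k, C (k + 1) = ⋃ j, Φ j '' C k)
    (hΦ : ∀ j, Function.Bijective (Φ j)) (hC1 : C 1 ⊆ C 0)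
    {k : ℕ} {w : List (Fin J)} (hw : w.length = k) {s : Set (EuclideanSpace ℝ (Fin d))}
    (hs : s ⊆ C 0 \ C 1) :
    wordMap Φ w '' s \ ⋃ w' ∈ {w' : List (Fin J) | w'.length = k ∧ w' ≠ w}, wordMap Φ w' '' C 0 ⊆
      C k \ C (k + 1) := by
  rintro _ ⟨⟨y, hy, rfl⟩, hnot⟩
  refine ⟨?_, fun hy' => ?_⟩
  · rw [← add_zero k, eq_iUnion_image hC k 0]
    exact mem_iUnion₂.2 ⟨w, hw, y, (hs hy).1, rfl⟩
  · rw [eq_iUnion_image hC k 1] at hy'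
    obtain ⟨w', hw', z, hz, hzy⟩ := mem_iUnion₂.1 hy'
    by_cases hww : w' = w
    · subst hww
      exact (hs hy).2 ((isHomeomorph hΦ w').injective hzy ▸ hz)
    · exact hnot (mem_iUnion₂.2 ⟨w', ⟨hw', hww⟩, z, hC1 hz, hzy⟩)

theorem closure_diff_succ_eq (hC : ∀ k, C (k + 1) = ⋃ j, Φ j '' C k)
    (hΦ : ∀ j, Function.Bijective (Φ j)) (hK : ∀ j, Φ j '' C 0 ⊆ C 0)
    (hclosed : IsClosed (C 0)) (hconv : Convex ℝ (C 0)) (hint : (interior (C 0)).Nonempty)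
    (hdisj : ∀ j ℓ, j ≠ ℓ → Disjoint (interior (Φ j '' C 0)) (interior (Φ ℓ '' C 0))) (k : ℕ) :
    closure (C k \ C (k + 1)) =
      closure (⋃ w ∈ {w : List (Fin J) | w.length = k}, wordMap Φ w '' interior (C 0 \ C 1)) := by
  have hC1 : C 1 ⊆ C 0 := (hC 0).trans_subset (iUnion_subset hK)
  have hclosed_image : ∀ w, IsClosed (wordMap Φ w '' C 0) := fun w =>
    (isHomeomorph hΦ w).isClosedMap _ hclosed
  have hC1_closed : IsClosed (C 1) := by
    rw [← zero_add 1, eq_iUnion_image hC 1 0]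
    exact (List.finite_length_eq _ 1).isClosed_biUnion fun w _ => hclosed_image w
  refine Subset.antisymm (closure_minimal ?_ isClosed_closure)
    (closure_minimal (iUnion₂_subset fun w hw => ?_) isClosed_closure)
  · refine (diff_succ_subset_iUnion_image hC k).trans (iUnion₂_subset fun w hw => ?_)
    calc wordMap Φ w '' (C 0 \ C 1)
        ⊆ wordMap Φ w '' closure (interior (C 0 \ C 1)) :=
          image_mono (hconv.diff_subset_closure_interior_diff hint hC1_closed)
      _ ⊆ closure (wordMap Φ w '' interior (C 0 \ C 1)) :=
          image_closure_subset_closure_image (isHomeomorph hΦ w).continuous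
      _ ⊆ _ := closure_mono (subset_biUnion_of_mem (u := fun w => wordMap Φ w '' _) hw)
  · have hU : IsOpen (wordMap Φ w '' interior (C 0 \ C 1)) :=
      (isHomeomorph hΦ w).isOpenMap _ isOpen_interior
    have hO : interior (C 0 \ C 1) ⊆ interior (C 0) := interior_mono sdiff_subset
    refine (hU.subset_closure_diff_biUnion ((List.finite_length_eq _ k).subset fun _ h => h.1)
      (fun w' _ => hclosed_image w') fun w' hw' => ?_).trans
      (closure_mono (image_diff_subset_diff_succ hC hΦ hC1 hw interior_subset))
    refine (disjoint_interior_image hΦ hK hdisj (hw.trans hw'.1.symm) hw'.2.symm).mono_left ?_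
    exact ((isHomeomorph hΦ w).image_interior _).subset.trans' (image_mono hO)

end wordMap

theorem stmt15_general (d J : ℕ)
    (Φ : Fin J → (EuclideanSpace ℝ (Fin d) →ᵃ[ℝ] EuclideanSpace ℝ (Fin d)))
    (F : Set (EuclideanSpace ℝ (Fin d)))
    (hFc : IsCompact F)
    (hFinv : F = ⋃ j, (Φ j) '' F)
    (hbij : ∀ j, Function.Bijective (Φ j))
    (C : ℕ → Set (EuclideanSpace ℝ (Fin d)))
    (hC0 : C 0 = convexHull ℝ F)
    (hCsucc : ∀ k, C (k + 1) = ⋃ j, (Φ j) '' C k)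
    (hnt : (interior (C 0 \ C 1)).Nonempty)
    (hts : ∀ j ℓ, j ≠ ℓ → interior ((Φ j) '' convexHull ℝ F) ∩ interior ((Φ ℓ) '' convexHull ℝ F) = ∅)
    -- generators: connected components of interior (C 0 \ C 1)
    (Gens : Set (Set (EuclideanSpace ℝ (Fin d))))
    (hGens : Gens = {G | ∃ x ∈ interior (C 0 \ C 1),
      G = connectedComponentIn (interior (C 0 \ C 1)) x}) :
    ∀ k, closure (C k \ C (k + 1)) =
        closure (⋃ w ∈ {w : List (Fin J) | w.length = k}, ⋃ G ∈ Gens, wordMap Φ w '' G) ∧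
      ∀ w w' : List (Fin J), w.length = k → w'.length = k →
        ∀ G ∈ Gens, ∀ G' ∈ Gens, (w, G) ≠ (w', G') →
          Disjoint (wordMap Φ w '' G) (wordMap Φ w' '' G') := by
  have hK : ∀ j, Φ j '' C 0 ⊆ C 0 := fun j => by
    rw [hC0, AffineMap.image_convexHull]
    exact convexHull_mono ((subset_iUnion (fun j => Φ j '' F) j).trans hFinv.ge)
  have hdisj : ∀ j ℓ, j ≠ ℓ → Disjoint (interior (Φ j '' C 0)) (interior (Φ ℓ '' C 0)) :=
    fun j ℓ h => hC0 ▸ disjoint_iff_inter_eq_empty.2 (hts j ℓ h)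
  have hclosed : IsClosed (C 0) := (hC0 ▸ hFc.convexHull_of_finiteDimensional).isClosed
  have hconv : Convex ℝ (C 0) := hC0 ▸ convex_convexHull ℝ F
  have hGen_sub : ∀ G ∈ Gens, G ⊆ interior (C 0) := by
    rw [hGens]
    rintro _ ⟨x, -, rfl⟩
    exact (connectedComponentIn_subset _ x).trans (interior_mono sdiff_subset)
  intro k
  refine ⟨?_, fun w w' hw hw' G hG G' hG' hne => ?_⟩
  · rw [wordMap.closure_diff_succ_eq hCsucc hbij hK hclosed hconv
      (hnt.mono (interior_mono sdiff_subset)) hdisj k, hGens]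
    simp only [← image_iUnion₂, ← sUnion_eq_biUnion, sUnion_connectedComponentIn]
  · refine wordMap.disjoint_image hbij hK hdisj (hw.trans hw'.symm) (hGen_sub G hG)
      (hGen_sub G' hG') (or_iff_not_imp_left.2 fun hww => ?_)
    rw [hGens] at hG hG'
    obtain ⟨x, -, rfl⟩ := hG
    obtain ⟨y, -, rfl⟩ := hG'
    exact connectedComponentIn_disjoint fun h => hne (by rw [not_not.1 hww, h])

theorem stmt15 (d J : ℕ)
    (Φ : Fin J → (EuclideanSpace ℝ (Fin d) →ᵃ[ℝ] EuclideanSpace ℝ (Fin d)))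
    (r : Fin J → NNReal) (hr : ∀ j, r j < 1)
    (hlip : ∀ j, LipschitzWith (r j) (Φ j))
    (F : Set (EuclideanSpace ℝ (Fin d)))
    (hFne : F.Nonempty) (hFc : IsCompact F)
    (hFinv : F = ⋃ j, (Φ j) '' F)
    (hbij : ∀ j, Function.Bijective (Φ j))
    (C : ℕ → Set (EuclideanSpace ℝ (Fin d)))
    (hC0 : C 0 = convexHull ℝ F)
    (hCsucc : ∀ k, C (k + 1) = ⋃ j, (Φ j) '' C k)
    (hnt : (interior (C 0 \ C 1)).Nonempty)
    (hts : ∀ j ℓ, j ≠ ℓ → interior ((Φ j) '' convexHull ℝ F) ∩ interior ((Φ ℓ) '' convexHull ℝ F) = ∅)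
    -- generators: connected components of interior (C 0 \ C 1)
    (Gens : Set (Set (EuclideanSpace ℝ (Fin d))))
    (hGens : Gens = {G | ∃ x ∈ interior (C 0 \ C 1),
      G = connectedComponentIn (interior (C 0 \ C 1)) x}) :
    ∀ k, closure (C k \ C (k + 1)) =
        closure (⋃ w ∈ {w : List (Fin J) | w.length = k}, ⋃ G ∈ Gens, wordMap Φ w '' G) ∧
      ∀ w w' : List (Fin J), w.length = k → w'.length = k →
        ∀ G ∈ Gens, ∀ G' ∈ Gens, (w, G) ≠ (w', G') →
          Disjoint (wordMap Φ w '' G) (wordMap Φ w' '' G') :=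
  stmt15_general d J Φ F hFc hFinv hbij C hC0 hCsucc hnt hts Gens hGens
end
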